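/- arXiv:math/0303013 — 3 statements merged into one kernel-verified Lean document; each statement's English description precedes it below -/
import Mathlib

section
/- The space $\mathcal{M}(d,r,D,n)$ of rank $r$, degree $-d$ subbundles of the evenly split bundle $Z_{D,n}$ on $\mathbb{P}^1$ is nonempty if and only if $H^1(\mathbb{P}^1,\mathcal{H}om(Z_{d,r},Z_{D-d,n-r}))=0$. -/
/-!
STATEMENT 10. The moduli space `M(d,r,D,n)` of rank `r`, degree `-d` subbundles of the
evenly split bundle `Z_{D,n}` on `ℙ¹` is nonempty if and only if
`H¹(ℙ¹, Hom(Z_{d,r}, Z_{D-d,n-r})) = 0`.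

Encoding.  Work on `ℙ¹` over `ℂ` with homogeneous coordinate ring `ℂ[X,Y]`
(`MvPolynomial (Fin 2) ℂ`).  `Z_{a,m}` has splitting type `zs a m : Fin m → ℤ`, the evenly
split sequence summing to `-a`.  A subbundle `V ⊆ Z_{D,n}` of rank `r` and degree `-d` is
the same as a splitting type `v : Fin r → ℤ` with `∑ v = -d` together with a sheaf map
`⊕ O(v i) → ⊕ O(zs D n j)`, i.e. a matrix `M` whose `(j,i)` entry is homogeneous of degree
`zs D n j - v i` (zero if that degree is negative), which is injective on every fiber,
i.e. the evaluated scalar matrix has trivial kernel at every point `x ≠ 0` of `ℂ² - 0`.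
The vanishing `H¹(ℙ¹, Hom(Z_{d,r}, Z_{D-d,n-r})) = 0` means every summand
`O(zs (D-d) (n-r) u - zs d r i)` of the `Hom` bundle has degree `≥ -1`.
-/

/-- Splitting type of the evenly split bundle `Z_{a,m}` of degree `-a` and rank `m`. -/
def zs (a : ℤ) (m : ℕ) : Fin m → ℤ :=
  fun u => if (u : ℤ) < (-a) % m then (-a) / m + 1 else (-a) / m

/-!
Write `-D = n * A + ρ` with `0 ≤ ρ < n`, so that `Z_{D,n} = O(A + 1)^ρ ⊕ O(A)^(n - ρ)`. Both sides
turn out to be equivalent to `-d ≤ r * A + min ρ r`.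

If `⊕ O(v i) → Z_{D,n}` is injective on fibers, it is injective at `[1 : 1]`, and the columns of
degree `≥ t` have nonzero entries only in the rows of degree `≥ t`; hence at most `#{j | t ≤ z j}`
of the `v i` are `≥ t`. Taking `t = A + 2` and `t = A + 1` bounds `∑ v i` by `r * A + min ρ r`.

Conversely, `Z_{d,r}` itself embeds, through a bidiagonal matrix with powers of `X₀` on the
diagonal and powers of `X₁` below it: at every point of `ℙ¹` one of its `r × r` minors is
triangular with nonzero diagonal.

The vanishing of `H¹` says `⌈-d / r⌉ - 1 ≤ ⌊(d - D) / (n - r)⌋`, and its equivalence with the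
inequality above is integer arithmetic.
-/

open Finset Matrix

section EvenlySplit

variable {a : ℤ} {m : ℕ}

lemma ediv_le_zs (u : Fin m) : -a / m ≤ zs a m u := by
  unfold zs; split_ifs <;> omega

lemma zs_le_ediv_add_one (u : Fin m) : zs a m u ≤ -a / m + 1 := by
  unfold zs; split_ifs <;> omega

lemma zs_antitone (a : ℤ) (m : ℕ) : Antitone (zs a m) := by
  intro u u' huu'
  have : (u : ℤ) ≤ u' := by exact_mod_cast huu'
  unfold zs; split_ifs <;> omega

lemma card_filter_lt_emod (hm : 0 < m) : (#{u : Fin m | (u : ℤ) < -a % m} : ℤ) = -a % m := by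
  have h₀ : 0 ≤ -a % m := Int.emod_nonneg _ (by omega)
  have h₁ : -a % m < m := Int.emod_lt_of_pos _ (by omega)
  rw [filter_congr (q := fun u : Fin m => (u : ℕ) < (-a % m).toNat) (fun u _ => by omega),
    Fin.card_filter_val_lt]
  omega

lemma card_filter_ediv_add_one_le_zs (hm : 0 < m) :
    (#{u | -a / m + 1 ≤ zs a m u} : ℤ) = -a % m := by
  rw [← card_filter_lt_emod hm]
  congr 2
  exact filter_congr fun u _ => by unfold zs; split_ifs <;> omega

lemma sum_zs (hm : 0 < m) : ∑ u, zs a m u = -a := by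
  have hsplit : ∀ u, zs a m u = -a / m + if (u : ℤ) < -a % m then 1 else 0 := fun u => by
    unfold zs; split_ifs <;> ring
  rw [sum_congr rfl fun u _ => hsplit u, sum_add_distrib, sum_boole, card_filter_lt_emod hm]
  simp only [sum_const, card_univ, Fintype.card_fin, nsmul_eq_mul]
  linarith [Int.mul_ediv_add_emod (-a) m]

lemma zs_zero_bounds (hm : 0 < m) :
    m * (zs a m ⟨0, hm⟩ - 1) < -a ∧ -a ≤ m * zs a m ⟨0, hm⟩ := by
  have hdiv := Int.mul_ediv_add_emod (-a) m
  have h₀ : 0 ≤ -a % m := Int.emod_nonneg _ (by omega)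
  have h₁ : -a % m < m := Int.emod_lt_of_pos _ (by omega)
  unfold zs
  split_ifs with h <;> simp only [Nat.cast_zero] at h <;> constructor <;> nlinarith

lemma zs_last (hm : 0 < m) : zs a m ⟨m - 1, by omega⟩ = -a / m := by
  have h₁ : -a % m < m := Int.emod_lt_of_pos _ (by omega)
  unfold zs
  rw [if_neg]
  push_cast [Fin.val_mk, Nat.cast_sub (show 1 ≤ m by omega)]
  omega

lemma zs_eq_of_le {A : ℤ} (u : Fin m) (h₀ : m * A ≤ -a) (h₁ : -a ≤ m * A + m) :
    zs a m u = A + if (u : ℤ) < -a - m * A then 1 else 0 := by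
  have hu := u.isLt
  rcases h₁.lt_or_eq with h₁ | h₁
  · obtain ⟨hq, hρ⟩ := (Int.ediv_emod_unique (a := -a) (b := m) (q := A) (r := -a - m * A)
      (by omega)).2 ⟨by ring, by linarith, by linarith⟩
    unfold zs; rw [hq, hρ]
    split_ifs <;> ring
  · obtain ⟨hq, hρ⟩ := (Int.ediv_emod_unique (a := -a) (b := m) (q := A + 1) (r := 0)
      (by omega)).2 ⟨by linarith, le_rfl, by omega⟩
    unfold zs; rw [hq, hρ, h₁]
    split_ifs <;> omega

lemma zs_le_of_le {A : ℤ} (hm : 0 < m) (u : Fin m) (h : -a ≤ m * A) : zs a m u ≤ A := by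
  obtain ⟨hlt, -⟩ := zs_zero_bounds (a := a) hm
  have : zs a m ⟨0, hm⟩ - 1 < A := lt_of_mul_lt_mul_left (hlt.trans_le h) (by positivity)
  have := zs_antitone a m (show (⟨0, hm⟩ : Fin m) ≤ u from Nat.zero_le _)
  omega

end EvenlySplit

lemma mul_sub_le_sub_iff_le_min {e E A c ρ r n : ℤ} (hr : 0 < r) (hrn : r < n)
    (hc₁ : r * (c - 1) < e) (hc₂ : e ≤ r * c) (hE : n * A + ρ = E) (hρ₀ : 0 ≤ ρ) (hρn : ρ < n) :
    (c - 1) * (n - r) ≤ E - e ↔ e - r * A ≤ min ρ r := by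
  subst hE
  rw [le_min_iff]
  constructor
  · intro h
    have hcA : c ≤ A + 1 := by
      by_contra! hc
      nlinarith
    rcases hcA.lt_or_eq with hcA | rfl <;> constructor <;> nlinarith
  · rintro ⟨h₁, h₂⟩
    have hcA : c ≤ A + 1 := by
      by_contra! hc
      nlinarith
    rcases hcA.lt_or_eq with hcA | rfl <;> nlinarith

lemma forall_neg_one_le_zs_sub_iff {d D : ℤ} {r n : ℕ} (hr : 0 < r) (hrn : r < n) :
    (∀ (i : Fin r) (u : Fin (n - r)), -1 ≤ zs (D - d) (n - r) u - zs d r i) ↔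
      -d - r * (-D / n) ≤ min (-D % n) r := by
  have hnr : 0 < n - r := by omega
  obtain ⟨hc₁, hc₂⟩ := zs_zero_bounds (a := d) hr
  calc (∀ (i : Fin r) (u : Fin (n - r)), -1 ≤ zs (D - d) (n - r) u - zs d r i)
      ↔ zs d r ⟨0, hr⟩ - 1 ≤ zs (D - d) (n - r) ⟨n - r - 1, by omega⟩ := by
        refine ⟨fun h => by linarith [h ⟨0, hr⟩ ⟨n - r - 1, by omega⟩], fun h i u => ?_⟩
        have := zs_antitone d r (show (⟨0, hr⟩ : Fin r) ≤ i from Nat.zero_le _)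
        have := zs_antitone (D - d) (n - r) (show u ≤ ⟨n - r - 1, by omega⟩ from
          Fin.le_iff_val_le_val.2 (by dsimp only; omega))
        linarith
    _ ↔ (zs d r ⟨0, hr⟩ - 1) * (n - r) ≤ -D - -d := by
        rw [zs_last hnr, Int.le_ediv_iff_mul_le (by omega), Nat.cast_sub hrn.le,
          show -(D - d) = -D - -d by ring]
    _ ↔ _ := mul_sub_le_sub_iff_le_min (by exact_mod_cast hr) (by exact_mod_cast hrn) hc₁ hc₂
        (Int.mul_ediv_add_emod _ _) (Int.emod_nonneg _ (by omega)) (Int.emod_lt_of_pos _ (by omega))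

section LinearAlgebra

variable {K m ι : Type*} [Fintype ι]

lemma card_le_card_of_mulVec_eq_zero [Field K] [Fintype m] {N : Matrix m ι K}
    (hN : ∀ w, N *ᵥ w = 0 → w = 0) {S : Finset ι} {T : Finset m}
    (hST : ∀ j ∉ T, ∀ i ∈ S, N j i = 0) : #S ≤ #T := by
  classical
  let N' : Matrix T S K := N.submatrix (↑) (↑)
  have hinj : Function.Injective N'.mulVecLin := by
    rw [← LinearMap.ker_eq_bot, LinearMap.ker_eq_bot']
    intro w hw
    let w' : ι → K := fun i => if h : i ∈ S then w ⟨i, h⟩ else 0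
    have hsum : ∀ j, (N *ᵥ w') j = ∑ i : S, N j i * w i := fun j => by
      rw [Matrix.mulVec, dotProduct, ← sum_subset (subset_univ S) fun i _ hi => by simp [w', hi],
        ← sum_coe_sort S]
      simp [w']
    have hw' : N *ᵥ w' = 0 := by
      ext j
      rw [hsum]
      by_cases hj : j ∈ T
      · exact congrFun hw ⟨j, hj⟩
      · exact sum_eq_zero fun i _ => by rw [hST j hj i i.2, zero_mul]
    ext i
    simpa [w'] using congrFun (hN w' hw') i
  simpa using LinearMap.finrank_le_finrank_of_injective hinj

lemma eq_zero_of_det_submatrix_ne_zero [CommRing K] [NoZeroDivisors K] [DecidableEq ι]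
    {N : Matrix m ι K} (p : ι → m) (hp : (N.submatrix p id).det ≠ 0) {w : ι → K}
    (hw : N *ᵥ w = 0) : w = 0 :=
  eq_zero_of_mulVec_eq_zero hp (funext fun i => congrFun hw (p i))

end LinearAlgebra

lemma sum_le_card_mul_add_card_filter {ι : Type*} (s : Finset ι) {v : ι → ℤ} {A : ℤ}
    (hv : ∀ i ∈ s, v i ≤ A + 1) : ∑ i ∈ s, v i ≤ #s * A + #{i ∈ s | A + 1 ≤ v i} :=
  calc ∑ i ∈ s, v i ≤ ∑ i ∈ s, (A + if A + 1 ≤ v i then 1 else 0) :=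
        sum_le_sum fun i hi => by have := hv i hi; split_ifs <;> omega
    _ = #s * A + #{i ∈ s | A + 1 ≤ v i} := by
        rw [sum_add_distrib, sum_const, sum_boole, nsmul_eq_mul]

section GradedMatrix

open MvPolynomial

variable {K : Type*} {n r : ℕ}

def IsGradedMatrix [CommSemiring K] (z : Fin n → ℤ) (v : Fin r → ℤ)
    (M : Fin n → Fin r → MvPolynomial (Fin 2) K) : Prop :=
  ∀ j i, (0 ≤ z j - v i → (M j i).IsHomogeneous (z j - v i).toNat) ∧
    (z j - v i < 0 → M j i = 0)

def IsFiberwiseInjective [CommSemiring K] (M : Fin n → Fin r → MvPolynomial (Fin 2) K) : Prop :=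
  ∀ x : Fin 2 → K, x ≠ 0 → ∀ w : Fin r → K, (∀ j, ∑ i, eval x (M j i) * w i = 0) → w = 0

variable [Field K] {z : Fin n → ℤ} {v : Fin r → ℤ} {M : Fin n → Fin r → MvPolynomial (Fin 2) K}

lemma IsGradedMatrix.card_filter_le_card_filter (hM : IsGradedMatrix z v M)
    (hinj : IsFiberwiseInjective M) (t : ℤ) : #{i | t ≤ v i} ≤ #{j | t ≤ z j} :=
  card_le_card_of_mulVec_eq_zero (N := fun j i => eval 1 (M j i))
    (fun w hw => hinj 1 one_ne_zero w (congrFun hw))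
    fun j hj i hi => by
      simp only [mem_filter, mem_univ, true_and, not_le] at hj hi
      rw [(hM j i).2 (by omega), map_zero]

lemma IsGradedMatrix.sum_le (hM : IsGradedMatrix z v M) (hinj : IsFiberwiseInjective M)
    {A : ℤ} (hz : ∀ j, z j ≤ A + 1) : ∑ i, v i ≤ r * A + min (#{j | A + 1 ≤ z j} : ℤ) r := by
  have hv : ∀ i, v i ≤ A + 1 := by
    intro i
    by_contra! hi
    have hempty : #{j | A + 2 ≤ z j} = 0 :=
      card_eq_zero.2 (filter_eq_empty_iff.2 fun j _ => by linarith [hz j])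
    have := hM.card_filter_le_card_filter hinj (A + 2)
    rw [hempty, Nat.le_zero, card_eq_zero, filter_eq_empty_iff] at this
    exact this (mem_univ i) (by omega)
  have hS : #{i | A + 1 ≤ v i} ≤ #{j | A + 1 ≤ z j} := hM.card_filter_le_card_filter hinj (A + 1)
  have hSr : #{i | A + 1 ≤ v i} ≤ r := (card_filter_le _ _).trans (by simp)
  calc ∑ i, v i ≤ r * A + #{i | A + 1 ≤ v i} := by
        simpa using sum_le_card_mul_add_card_filter univ fun i _ => hv i
    _ ≤ r * A + min (#{j | A + 1 ≤ z j} : ℤ) r := by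
        gcongr
        exact le_min (by exact_mod_cast hS) (by exact_mod_cast hSr)

end GradedMatrix

section Bidiagonal

open MvPolynomial

variable {K : Type*} {n r : ℕ} {z : Fin n → ℤ} {v : Fin r → ℤ} {k : ℕ}

noncomputable def bidiagonalMatrix [CommSemiring K] (z : Fin n → ℤ) (v : Fin r → ℤ) (k : ℕ) :
    Fin n → Fin r → MvPolynomial (Fin 2) K :=
  fun j i => if (j : ℕ) = i then X 0 ^ (z j - v i).toNat
    else if (j : ℕ) = i + 1 ∧ k ≤ i then X 1 ^ (z j - v i).toNat else 0

lemma isGradedMatrix_bidiagonalMatrix [CommSemiring K]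
    (hdiag : ∀ (i : Fin r) (j : Fin n), (j : ℕ) = i → v i ≤ z j)
    (hchain : ∀ (i : Fin r) (j : Fin n), (j : ℕ) = i + 1 → k ≤ i → v i ≤ z j) :
    IsGradedMatrix z v (bidiagonalMatrix (K := K) z v k) := by
  intro j i
  unfold bidiagonalMatrix
  refine ⟨fun _ => ?_, fun hneg => ?_⟩ <;> split_ifs with h₁ h₂
  · exact isHomogeneous_X_pow _ _
  · exact isHomogeneous_X_pow _ _
  · exact isHomogeneous_zero _ _ _
  · exact absurd (hdiag i j h₁) (by omega)
  · exact absurd (hchain i j h₂.1 h₂.2) (by omega)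
  · rfl

lemma isFiberwiseInjective_bidiagonalMatrix [Field K] (hrn : r < n)
    (hfix : ∀ (i : Fin r) (j : Fin n), (j : ℕ) = i → (i : ℕ) < k → v i = z j) :
    IsFiberwiseInjective (bidiagonalMatrix (K := K) z v k) := by
  classical
  intro x hx w hw
  let N : Matrix (Fin n) (Fin r) K := fun j i => eval x (bidiagonalMatrix z v k j i)
  have hN : ∀ j i, N j i = if (j : ℕ) = i then x 0 ^ (z j - v i).toNat
      else if (j : ℕ) = i + 1 ∧ k ≤ i then x 1 ^ (z j - v i).toNat else 0 := fun j i => by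
    simp only [N, bidiagonalMatrix]
    split_ifs <;> simp
  by_cases hx₀ : x 0 = 0
  · -- at `[0 : 1]` the rows `i` (for `i < k`) and `i + 1` (for `k ≤ i`) give a triangular minor
    have hx₁ : x 1 ≠ 0 := fun hx₁ => hx (funext fun l => by fin_cases l <;> assumption)
    let p : Fin r → Fin n := fun i => ⟨if (i : ℕ) < k then i else i + 1, by split_ifs <;> omega⟩
    refine eq_zero_of_det_submatrix_ne_zero p ?_ (funext hw)
    have htri : (N.submatrix p id).IsUpperTriangular := fun i i' hi => by
      simp only [submatrix_apply, id, hN, p]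
      have : (i' : ℕ) < i := hi
      split_ifs <;> first | rfl | omega
    rw [det_of_isUpperTriangular htri]
    refine prod_ne_zero_iff.2 fun i _ => ?_
    simp only [submatrix_apply, id, hN, p]
    split_ifs with hik <;> try omega
    · rw [hfix i ⟨i, by omega⟩ rfl hik, sub_self, Int.toNat_zero, pow_zero]
      exact one_ne_zero
    · exact pow_ne_zero _ hx₁
  · have htri : (N.submatrix (Fin.castLE hrn.le) id).IsLowerTriangular := fun i i' hi => by
      simp only [submatrix_apply, id, hN, Fin.val_castLE]
      have : (i : ℕ) < i' := hi
      split_ifs <;> first | rfl | omega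
    refine eq_zero_of_det_submatrix_ne_zero (Fin.castLE hrn.le) ?_ (funext hw)
    rw [det_of_isLowerTriangular _ htri]
    exact prod_ne_zero_iff.2 fun i _ => by
      simpa only [submatrix_apply, id, hN, Fin.val_castLE, if_true] using pow_ne_zero _ hx₀

end Bidiagonal

lemma exists_subbundle_of_le_min {d D : ℤ} {r n : ℕ} (hr : 0 < r) (hrn : r < n)
    (h : -d - r * (-D / n) ≤ min (-D % n) r) :
    ∃ (v : Fin r → ℤ) (M : Fin n → Fin r → MvPolynomial (Fin 2) ℂ),
      ∑ i, v i = -d ∧ IsGradedMatrix (zs D n) v M ∧ IsFiberwiseInjective M := by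
  set A := -D / n
  set m := -d - r * A
  have hmρ : m ≤ -D % n := h.trans (min_le_left _ _)
  have hmr : m ≤ r := h.trans (min_le_right _ _)
  have hz : ∀ j : Fin n, (j : ℤ) < m → zs D n j = A + 1 := fun j hj => by
    unfold zs; rw [if_pos (by omega)]
  -- `Z_{d,r} = O(A + 1)^m ⊕ O(A)^(r - m)` when `0 ≤ m`, and has all degrees `≤ A` otherwise
  have hv : ∀ i : Fin r, ((i : ℤ) < m → zs d r i = A + 1) ∧ (m ≤ i → zs d r i ≤ A) := by
    intro i
    rcases le_or_gt 0 m with hm | hm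
    · rw [zs_eq_of_le (A := A) i (by omega) (by omega)]
      constructor <;> intro <;> split_ifs <;> omega
    · have := zs_le_of_le (a := d) (A := A) hr i (by omega)
      constructor <;> intro <;> omega
  refine ⟨zs d r, bidiagonalMatrix (zs D n) (zs d r) m.toNat, sum_zs hr,
    isGradedMatrix_bidiagonalMatrix ?_ ?_, isFiberwiseInjective_bidiagonalMatrix hrn ?_⟩
  · intro i j hji
    rcases lt_or_ge (i : ℤ) m with him | him
    · rw [(hv i).1 him, hz j (by omega)]
    · linarith [(hv i).2 him, ediv_le_zs (a := D) j]
  · intro i j _ hki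
    linarith [(hv i).2 (by omega), ediv_le_zs (a := D) j]
  · intro i j hji hik
    rw [(hv i).1 (by omega), hz j (by omega)]

theorem stmt10 (d D : ℤ) (r n : ℕ) (hr : 0 < r) (hrn : r < n) :
    (∃ (v : Fin r → ℤ) (M : Fin n → Fin r → MvPolynomial (Fin 2) ℂ),
        (∑ i, v i) = -d ∧
        (∀ j i, (0 ≤ zs D n j - v i → (M j i).IsHomogeneous (zs D n j - v i).toNat) ∧
                (zs D n j - v i < 0 → M j i = 0)) ∧
        (∀ x : Fin 2 → ℂ, x ≠ 0 → ∀ w : Fin r → ℂ,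
          (∀ j, ∑ i, MvPolynomial.eval x (M j i) * w i = 0) → w = 0)) ↔
    (∀ (i : Fin r) (u : Fin (n - r)), -1 ≤ zs (D - d) (n - r) u - zs d r i) := by
  rw [forall_neg_one_le_zs_sub_iff hr hrn]
  constructor
  · rintro ⟨v, M, hsum, hM, hinj⟩
    have hle := IsGradedMatrix.sum_le hM hinj (zs_le_ediv_add_one (a := D))
    rw [card_filter_ediv_add_one_le_zs (by omega), hsum] at hle
    linarith
  · exact exists_subbundle_of_le_min hr hrn
end

section
/- Let $W$ be an $n$-dimensional vector space, $V\subseteq W$ an $r$-dimensional subspace, $F_\bullet$ a complete flag of $V$, $G_\bullet$ a complete flag of $W/V$, and $I\subseteq\{1,\dots,n\}$ a subset of cardinality $r$. Then there exists a complete flag $E_\bullet$ of $W$ such that $V\in\Omega^o_I(E_\bullet)$ and the flags induced by $E_\bullet$ on $V$ and $W/V$ are $F_\bullet$ and $G_\bullet$ respectively. -/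
/-!
STATEMENT 12. Let `W` be `n`-dimensional, `V ⊆ W` of dimension `r`, `F_•` a complete flag
of `V`, `G_•` a complete flag of `W/V`, and `I = {i₁ < … < i_r} ⊆ {1,…,n}`.  Then there is
a complete flag `E_•` of `W` with `V ∈ Ω°_I(E_•)` such that the induced flags on `V` and
`W/V` are `F_•` and `G_•`.

Here, writing `c_j = #{a : i_a ≤ j}`, the condition `V ∈ Ω°_I(E_•)` with induced flag
`F_•` on `V` says exactly `V ∩ E_j = F_{c_j}` for all `j ≤ n` (so `dim (V ∩ E_j) = c_j`),
and the induced flag on `W/V` is `G` when the image of `E_j` in `W/V` equals `G_{j - c_j}`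
for all `j ≤ n`.
-/

theorem stmt12 (k W : Type) [Field k] [AddCommGroup W] [Module k W] [FiniteDimensional k W]
    (n r : ℕ) (hW : Module.finrank k W = n)
    (V : Submodule k W) (hV : Module.finrank k V = r)
    (i : Fin r → ℕ) (hmono : StrictMono i) (h1 : ∀ a, 1 ≤ i a) (hn : ∀ a, i a ≤ n)
    (F : ℕ → Submodule k V) (hFmono : Monotone F)
    (hF : ∀ a ≤ r, Module.finrank k (F a) = a)
    (G : ℕ → Submodule k (W ⧸ V)) (hGmono : Monotone G)
    (hG : ∀ b ≤ n - r, Module.finrank k (G b) = b) :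
    ∃ E : ℕ → Submodule k W, Monotone E ∧
      (∀ j ≤ n, Module.finrank k (E j) = j) ∧
      (∀ j ≤ n, Submodule.comap V.subtype (E j) =
        F ((Finset.univ.filter fun a => i a ≤ j).card)) ∧
      (∀ j ≤ n, Submodule.map V.mkQ (E j) =
        G (j - (Finset.univ.filter fun a => i a ≤ j).card)) := by
  classical
  set c : ℕ → ℕ := fun j => (Finset.univ.filter fun a => i a ≤ j).card with hc_def
  have hinj := hmono.injective
  -- c is monotone
  have hc_eq : ∀ j, c j = (Finset.univ.filter fun a => i a ≤ j).card := fun _ => rfl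
  have hc_mono : Monotone c := by
    intro j j' hjj'
    apply Finset.card_le_card
    intro a ha
    simp only [Finset.mem_filter, Finset.mem_univ, true_and] at ha ⊢
    omega
  -- c j ≤ j
  have hcj : ∀ j, c j ≤ j := by
    intro j
    have : (Finset.univ.filter fun a => i a ≤ j).card ≤ (Finset.Icc 1 j).card := by
      apply Finset.card_le_card_of_injOn i
      · intro a ha
        simp only [Finset.mem_coe, Finset.mem_filter, Finset.mem_univ, true_and] at ha
        simp only [Finset.mem_coe, Finset.mem_Icc]
        exact ⟨h1 a, ha⟩
      · exact hinj.injOn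
    simpa using this
  -- c j ≤ r
  have hcr : ∀ j, c j ≤ r := by
    intro j
    calc c j ≤ (Finset.univ : Finset (Fin r)).card := Finset.card_le_card (Finset.filter_subset _ _)
    _ = r := by simp
  -- r - c j ≤ n - j for j ≤ n, hence j - c j ≤ n - r
  have hrc : ∀ j, r ≤ c j + (n - j) := by
    intro j
    have hle : (Finset.univ.filter fun a => ¬ i a ≤ j).card ≤ (Finset.Icc (j+1) n).card := by
      apply Finset.card_le_card_of_injOn i
      · intro a ha
        simp only [Finset.mem_coe, Finset.mem_filter, Finset.mem_univ, true_and, not_le] at ha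
        simp only [Finset.mem_coe, Finset.mem_Icc]
        exact ⟨ha, hn a⟩
      · exact hinj.injOn
    have hsplit := Finset.card_filter_add_card_filter_not
      (s := (Finset.univ : Finset (Fin r))) (p := fun a => i a ≤ j)
    have hcard : (Finset.univ : Finset (Fin r)).card = r := by simp
    have hicc : (Finset.Icc (j+1) n).card = n - j := by
      rw [Nat.card_Icc]; omega
    rw [hc_eq j]
    omega
  have hd : ∀ j, j ≤ n → j - c j ≤ n - r := by
    intro j hj
    have := hrc j
    omega
  -- j - c j is monotone
  have hc_step : ∀ j, c (j + 1) ≤ c j + 1 := by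
    intro j
    have hsub : (Finset.univ.filter fun a => i a ≤ j + 1) ⊆
        (Finset.univ.filter fun a => i a ≤ j) ∪ (Finset.univ.filter fun a => i a = j + 1) := by
      intro a ha
      simp only [Finset.mem_filter, Finset.mem_univ, true_and, Finset.mem_union] at ha ⊢
      omega
    have hone : (Finset.univ.filter fun a => i a = j + 1).card ≤ 1 := by
      apply Finset.card_le_one.mpr
      intro a ha b hb
      simp only [Finset.mem_filter, Finset.mem_univ, true_and] at ha hb
      exact hinj (ha.trans hb.symm)
    calc c (j + 1) ≤ ((Finset.univ.filter fun a => i a ≤ j) ∪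
        (Finset.univ.filter fun a => i a = j + 1)).card := Finset.card_le_card hsub
    _ ≤ c j + (Finset.univ.filter fun a => i a = j + 1).card := Finset.card_union_le _ _
    _ ≤ c j + 1 := by omega
  have hd_mono : Monotone (fun j => j - c j) := by
    apply monotone_nat_of_le_succ
    intro j
    have h1' := hc_step j
    have h2' := hcj j
    show j - c j ≤ (j + 1) - c (j + 1)
    omega
  -- a linear section of the quotient map
  obtain ⟨s, hs⟩ := V.mkQ.exists_rightInverse_of_surjective
    (LinearMap.range_eq_top.2 V.mkQ_surjective)
  have hsec : ∀ x, V.mkQ (s x) = x := fun x => LinearMap.congr_fun hs x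
  have hsinj : Function.Injective s := Function.LeftInverse.injective hsec
  -- s(G m) meets V trivially
  have hdisj : ∀ m : ℕ, ∀ x ∈ Submodule.map s (G m), x ∈ V → x = 0 := by
    rintro m x ⟨g, hg, rfl⟩ hx
    have h0 : V.mkQ (s g) = 0 := by
      rw [Submodule.mkQ_apply, Submodule.Quotient.mk_eq_zero]
      exact hx
    rw [hsec] at h0
    rw [h0]
    exact map_zero s
  refine ⟨fun j => (F (c j)).map V.subtype ⊔ (G (j - c j)).map s, ?_, ?_, ?_, ?_⟩
  · -- monotone
    intro j j' hjj'
    exact sup_le_sup (Submodule.map_mono (hFmono (hc_mono hjj')))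
      (Submodule.map_mono (hGmono (hd_mono hjj')))
  · -- dimensions
    intro j hj
    show Module.finrank k ↥((F (c j)).map V.subtype ⊔ (G (j - c j)).map s) = j
    have hAB : (F (c j)).map V.subtype ⊓ (G (j - c j)).map s = ⊥ := by
      rw [eq_bot_iff]
      rintro x ⟨hxA, hxB⟩
      have hxV : x ∈ V := Submodule.map_subtype_le _ _ hxA
      simpa using hdisj _ x hxB hxV
    have hsum := Submodule.finrank_sup_add_finrank_inf_eq
      ((F (c j)).map V.subtype) ((G (j - c j)).map s)
    rw [hAB, finrank_bot] at hsum
    have hA : Module.finrank k ((F (c j)).map V.subtype) = c j := by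
      rw [Submodule.finrank_map_subtype_eq]
      exact hF _ (hcr j)
    have hB : Module.finrank k ((G (j - c j)).map s) = j - c j := by
      rw [← LinearEquiv.finrank_eq (Submodule.equivMapOfInjective s hsinj (G (j - c j)))]
      exact hG _ (hd j hj)
    have := hcj j
    omega
  · -- intersection with V
    intro j hj
    apply Submodule.map_injective_of_injective V.injective_subtype
    rw [Submodule.map_comap_subtype]
    apply le_antisymm
    · rintro x ⟨hxV, hxE⟩
      obtain ⟨a, ha, b, hb, rfl⟩ := Submodule.mem_sup.mp hxE
      have haV : a ∈ V := Submodule.map_subtype_le _ _ ha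
      have hbV : b ∈ V := by
        have : (a + b) - a ∈ V := V.sub_mem hxV haV
        simpa using this
      have hb0 : b = 0 := hdisj _ b hb hbV
      rw [hb0, add_zero]
      exact ha
    · exact le_inf (Submodule.map_subtype_le _ _) le_sup_left
  · -- image in W/V
    intro j hj
    show Submodule.map V.mkQ ((F (c j)).map V.subtype ⊔ (G (j - c j)).map s) = G (j - c j)
    have hA : Submodule.map V.mkQ ((F (c j)).map V.subtype) = ⊥ := by
      rw [Submodule.eq_bot_iff]
      rintro x ⟨y, hy, rfl⟩
      have hyV : y ∈ V := Submodule.map_subtype_le _ _ hy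
      rw [Submodule.mkQ_apply, Submodule.Quotient.mk_eq_zero]
      exact hyV
    rw [Submodule.map_sup, hA, bot_sup_eq, ← Submodule.map_comp, hs, Submodule.map_id]
end

section
/- Let $X$ be an irreducible variety, $S$ a scheme, and $\phi:V\to Q$ a morphism of vector bundles on $X\times S$. Then the set of points $s\in S$ for which $\phi_s:V_s\to Q_s$ is injective as a morphism of sheaves on $X\times\{s\}$ is open in $S$. -/
/-!
STATEMENT 16. Let `X` be an irreducible variety, `S` a scheme, and `φ : V → Q` a morphism
of vector bundles on `X × S`.  Then `{s ∈ S : φ_s is injective as a morphism of sheaves}`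
is open in `S`.

Formalization.  The question is local on `X` and `S` and vector bundles are locally
trivial, so we take `X` affine and irreducible with coordinate ring `A` (a domain, an
algebra over the algebraically closed base field `k`), `S = Spec B` affine, and
`V = O^a`, `Q = O^b` trivialized; then `φ` is a `b × a` matrix `M` over
`A ⊗ₖ B = Γ(X × S)`.  For a point `p ∈ Spec B`, restricting `φ` to `X × {p}` amounts to
applying `A ⊗ₖ B → A ⊗ₖ (B/p)` entrywise, and `φ_p` is injective as a morphism of sheaves
iff the resulting matrix over the domain `A ⊗ₖ (B/p)` (note `k` is algebraically closed)
has trivial kernel, i.e. `mulVecLin` is injective.  The statement: this locus is open.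
-/

open TensorProduct

set_option maxHeartbeats 1000000
set_option synthInstance.maxHeartbeats 200000

open Matrix

section Aux

theorem stmt16_exists_algHom (k : Type) [Field k] [IsAlgClosed k]
    (R : Type) [CommRing R] [IsDomain R] [Algebra k R] [Algebra.FiniteType k R]
    (r : R) (hr : r ≠ 0) : ∃ φ : R →ₐ[k] k, φ r ≠ 0 := by
  haveI : IsJacobsonRing R := isJacobsonRing_of_finiteType (A := k)
  have hjac : (⊥ : Ideal R).jacobson = ⊥ :=
    isJacobsonRing_iff_prime_eq.mp ‹_› ⊥ Ideal.bot_prime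
  have hmem : r ∉ (⊥ : Ideal R).jacobson := by
    rw [hjac]; simpa using hr
  rw [Ideal.jacobson, Ideal.mem_sInf] at hmem
  push_neg at hmem
  obtain ⟨J, ⟨-, hJmax⟩, hrJ⟩ := hmem
  haveI := hJmax
  letI : Field (R ⧸ J) := Ideal.Quotient.field J
  haveI : Algebra.FiniteType k (R ⧸ J) :=
    Algebra.FiniteType.of_surjective (Ideal.Quotient.mkₐ k J)
      (Ideal.Quotient.mkₐ_surjective k J)
  haveI : Module.Finite k (R ⧸ J) := finite_of_finite_type_of_isJacobsonRing k (R ⧸ J)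
  haveI : Algebra.IsIntegral k (R ⧸ J) := Algebra.IsIntegral.of_finite k (R ⧸ J)
  have hsurj : Function.Surjective (algebraMap k (R ⧸ J)) :=
    IsAlgClosed.algebraMap_bijective_of_isIntegral.2
  have hbij : Function.Bijective (Algebra.ofId k (R ⧸ J)) :=
    ⟨fun x y h => (algebraMap k (R ⧸ J)).injective h, hsurj⟩
  let e : k ≃ₐ[k] (R ⧸ J) := AlgEquiv.ofBijective (Algebra.ofId k (R ⧸ J)) hbij
  refine ⟨(e.symm : (R ⧸ J) →ₐ[k] k).comp (Ideal.Quotient.mkₐ k J), ?_⟩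
  have h1 : (Ideal.Quotient.mkₐ k J) r ≠ 0 := by
    simpa [Ideal.Quotient.eq_zero_iff_mem] using hrJ
  simp only [AlgHom.coe_comp, Function.comp_apply]
  intro h0
  exact h1 (by simpa using e.symm.injective (h0.trans (map_zero e.symm).symm))

theorem stmt16_field_case {K : Type} [Field K] {a b : ℕ} {M : Matrix (Fin b) (Fin a) K}
    (h : Function.Injective M.mulVecLin) :
    ∃ f : Fin a → Fin b, Function.Injective f ∧ (M.submatrix f id).det ≠ 0 := by
  classical
  -- the rows of `M` span `K^a`
  have hrank : M.rank = a := by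
    rw [Matrix.rank, LinearMap.finrank_range_of_inj h]
    simp [Module.finrank_pi]
  have hspan : Submodule.span K (Set.range (fun j : Fin b => M j)) = ⊤ := by
    have h1 : Mᵀ.rank = a := by rw [Matrix.rank_transpose, hrank]
    have h2 : Mᵀ.rank = Module.finrank K (Submodule.span K (Set.range Mᵀᵀ)) :=
      Matrix.rank_eq_finrank_span_cols Mᵀ
    rw [Matrix.transpose_transpose] at h2
    apply Submodule.eq_top_of_finrank_eq
    rw [← h2, h1]
    simp [Module.finrank_pi]
  obtain ⟨t, hsub, htspan, htind⟩ :=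
    exists_linearIndependent K (Set.range (fun j : Fin b => M j))
  rw [hspan] at htspan
  have htfin : t.Finite := htind.setFinite
  haveI : Fintype t := htfin.fintype
  -- t is a basis of K^a
  let bas : Module.Basis t K (Fin a → K) := Module.Basis.mk htind (by rw [Subtype.range_coe, htspan])
  have hcard : Fintype.card t = a := by
    have := Module.finrank_eq_card_basis bas
    simpa [Module.finrank_pi] using this.symm
  let e : Fin a ≃ t := (Fintype.equivFinOfCardEq hcard).symm
  -- choose row indices
  have hchoice : ∀ x : t, ∃ j : Fin b, M j = (x : Fin a → K) := fun x => hsub x.2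
  choose g hg using hchoice
  refine ⟨fun i => g (e i), ?_, ?_⟩
  · intro i i' hii
    simp only at hii
    apply e.injective
    apply Subtype.ext
    rw [← hg (e i), ← hg (e i'), hii]
  · have hind : LinearIndependent K fun i : Fin a => (M.submatrix (fun i => g (e i)) id) i := by
      have : (fun i : Fin a => (M.submatrix (fun i => g (e i)) id) i)
          = fun i => ((e i : Fin a → K)) := by
        funext i
        funext i'
        simp only [Matrix.submatrix_apply, id_eq]
        rw [show M (g (e i)) = ((e i : Fin a → K)) from hg (e i)]
      rw [this]
      exact htind.comp e e.injective
    have hunit : IsUnit (M.submatrix (fun i => g (e i)) id) :=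
      Matrix.linearIndependent_rows_iff_isUnit.mp hind
    exact IsUnit.ne_zero ((Matrix.isUnit_iff_isUnit_det _).mp hunit)

theorem stmt16_crit {R : Type} [CommRing R] [IsDomain R] {a b : ℕ}
    (M : Matrix (Fin b) (Fin a) R) :
    Function.Injective M.mulVecLin ↔
      ∃ f : Fin a → Fin b, Function.Injective f ∧ (M.submatrix f id).det ≠ 0 := by
  classical
  constructor
  · intro h
    set K := FractionRing R
    let M' := M.map (algebraMap R K)
    have hinj : Function.Injective M'.mulVecLin := by
      rw [← LinearMap.ker_eq_bot, LinearMap.ker_eq_bot']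
      intro w hw
      simp only [Matrix.mulVecLin_apply] at hw
      obtain ⟨c, hc⟩ := IsLocalization.exist_integer_multiples_of_finset
        (nonZeroDivisors R) (Finset.univ.image w)
      have hc' : ∀ i : Fin a, IsLocalization.IsInteger R ((c : R) • w i) := fun i =>
        hc (w i) (Finset.mem_image_of_mem w (Finset.mem_univ i))
      choose v hv using hc'
      have hMv : M.mulVec v = 0 := by
        funext j
        apply IsFractionRing.injective R K
        rw [show (0 : Fin b → R) j = 0 from rfl, map_zero]
        have heq : algebraMap R K (M.mulVec v j) = (c : R) • (M'.mulVec w j) := by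
          simp only [Matrix.mulVec, dotProduct, map_sum, _root_.map_mul, Finset.smul_sum]
          apply Finset.sum_congr rfl
          intro i _
          rw [hv i, Algebra.smul_def, Algebra.smul_def]
          simp only [M', Matrix.map_apply]
          ring
        rw [heq, show M'.mulVec w = 0 from hw, Pi.zero_apply, smul_zero]
      have hv0 : v = 0 := by
        have := h (a₁ := v) (a₂ := 0) ?_
        · exact this
        · simp [Matrix.mulVecLin_apply, hMv]
      funext i
      have : algebraMap R K (v i) = (c : R) • w i := hv i
      rw [hv0] at this
      simp only [Pi.zero_apply, map_zero] at this
      have hcne : algebraMap R K (c : R) ≠ 0 :=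
        IsFractionRing.to_map_ne_zero_of_mem_nonZeroDivisors c.2
      rw [Algebra.smul_def] at this
      have := this.symm
      rcases mul_eq_zero.mp this with h1 | h1
      · exact absurd h1 hcne
      · simp [h1]
    obtain ⟨f, hf, hdet⟩ := stmt16_field_case hinj
    refine ⟨f, hf, ?_⟩
    intro h0
    apply hdet
    have : (M'.submatrix f id) = (M.submatrix f id).map (algebraMap R K) := by
      rw [Matrix.submatrix_map]
    rw [this, ← RingHom.mapMatrix_apply, ← RingHom.map_det, h0, map_zero]
  · rintro ⟨f, hf, hdet⟩
    rw [← LinearMap.ker_eq_bot, LinearMap.ker_eq_bot']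
    intro v hv
    simp only [Matrix.mulVecLin_apply] at hv
    by_contra hne
    apply hdet
    rw [← Matrix.exists_mulVec_eq_zero_iff]
    refine ⟨v, hne, ?_⟩
    funext j
    simp only [Matrix.mulVec, Matrix.submatrix_apply, id_eq, Pi.zero_apply]
    have := congrFun hv (f j)
    simpa [Matrix.mulVec, dotProduct] using this

theorem stmt16_open_nonvanishing (k : Type) [Field k]
    (A : Type) [CommRing A] [Algebra k A]
    (B : Type) [CommRing B] [Algebra k B] (d : A ⊗[k] B) :
    IsOpen {p : PrimeSpectrum B |
      Algebra.TensorProduct.map (AlgHom.id k A) (Ideal.Quotient.mkₐ k p.asIdeal) d ≠ 0} := by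
  classical
  let ba := Module.Basis.ofVectorSpace k A
  set ι := Module.Basis.ofVectorSpaceIndex k A with hι
  -- coordinate expansion in a basis of `A`, with coefficients in the right factor
  let E : (N : Type) → [inst : AddCommGroup N] → [inst2 : Module k N] →
      (A ⊗[k] N ≃ₗ[k] (ι →₀ N)) := fun N _ _ =>
    (TensorProduct.congr ba.repr (LinearEquiv.refl k N)).trans
      (TensorProduct.finsuppScalarLeft k N ι)
  have hE : ∀ (N : Type) [AddCommGroup N] [Module k N] (x : A) (n : N) (i : ι),
      E N (x ⊗ₜ[k] n) i = ba.repr x i • n := by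
    intro N _ _ x n i
    simp [E, TensorProduct.congr]
  -- naturality of the coordinates with respect to the quotient maps
  have key : ∀ (p : PrimeSpectrum B) (x : A ⊗[k] B) (i : ι),
      E (B ⧸ p.asIdeal)
          (Algebra.TensorProduct.map (AlgHom.id k A) (Ideal.Quotient.mkₐ k p.asIdeal) x) i =
        Ideal.Quotient.mk p.asIdeal (E B x i) := by
    intro p x i
    induction x using TensorProduct.induction_on with
    | zero => simp
    | tmul x y => rw [Algebra.TensorProduct.map_tmul, hE, hE]; simp [Algebra.smul_def]
    | add x y hx hy => simp only [map_add, Finsupp.add_apply, hx, hy]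
  have hiff : ∀ (p : PrimeSpectrum B),
      Algebra.TensorProduct.map (AlgHom.id k A) (Ideal.Quotient.mkₐ k p.asIdeal) d ≠ 0 ↔
        ∃ i : ι, E B d i ∉ p.asIdeal := by
    intro p
    rw [← not_forall, not_iff_not]
    constructor
    · intro h0 i
      rw [← Ideal.Quotient.eq_zero_iff_mem, ← key p d i, h0]
      simp
    · intro hall
      apply (E (B ⧸ p.asIdeal)).injective
      rw [map_zero]
      ext i
      rw [key p d i, Finsupp.coe_zero, Pi.zero_apply, Ideal.Quotient.eq_zero_iff_mem]
      exact hall i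
  have hset : {p : PrimeSpectrum B |
      Algebra.TensorProduct.map (AlgHom.id k A) (Ideal.Quotient.mkₐ k p.asIdeal) d ≠ 0} =
      ⋃ i : ι, (PrimeSpectrum.basicOpen (E B d i) : Set (PrimeSpectrum B)) := by
    ext p
    rw [Set.mem_setOf_eq, hiff p, Set.mem_iUnion]
    apply exists_congr
    intro i
    rfl
  rw [hset]
  exact isOpen_iUnion fun i => (PrimeSpectrum.basicOpen (E B d i)).isOpen

theorem stmt16_tensor_isDomain (k : Type) [Field k] [IsAlgClosed k]
    (A : Type) [CommRing A] [IsDomain A] [Algebra k A]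
    (C : Type) [CommRing C] [IsDomain C] [Algebra k C] :
    IsDomain (A ⊗[k] C) := by
  classical
  let bc := Module.Basis.ofVectorSpace k C
  set κ := Module.Basis.ofVectorSpaceIndex k C with hκ
  -- coordinates with coefficients in `A`
  let F : (A' : Type) → [inst : AddCommGroup A'] → [inst2 : Module k A'] →
      (A' ⊗[k] C ≃ₗ[k] (κ →₀ A')) := fun A' _ _ =>
    (TensorProduct.congr (LinearEquiv.refl k A') bc.repr).trans
      (TensorProduct.finsuppScalarRight k k A' κ)
  have hF : ∀ (A' : Type) [AddCommGroup A'] [Module k A'] (x : A') (c : C) (j : κ),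
      F A' (x ⊗ₜ[k] c) j = bc.repr c j • x := by
    intro A' _ _ x c j
    simp [F, TensorProduct.congr]
  have hFsymm : ∀ (A' : Type) [AddCommGroup A'] [Module k A'] (j : κ) (x : A'),
      (F A').symm (Finsupp.single j x) = x ⊗ₜ[k] bc j := by
    intro A' _ _ j x
    simp only [F, LinearEquiv.trans_symm, LinearEquiv.trans_apply,
      TensorProduct.finsuppScalarRight_symm_apply_single]
    simp [TensorProduct.congr]
  -- reconstruction
  have hsymm_sum : ∀ (A' : Type) [AddCommGroup A'] [Module k A'] (f : κ →₀ A'),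
      (F A').symm f = ∑ j ∈ f.support, (f j) ⊗ₜ[k] bc j := by
    intro A' _ _ f
    conv_lhs => rw [← Finsupp.sum_single f]
    rw [map_finsuppSum, Finsupp.sum]
    exact Finset.sum_congr rfl fun j _ => hFsymm A' j _
  have hrec : ∀ (A' : Type) [AddCommGroup A'] [Module k A'] (x : A' ⊗[k] C),
      x = ∑ j ∈ (F A' x).support, (F A' x j) ⊗ₜ[k] bc j := by
    intro A' _ _ x
    conv_lhs => rw [← (F A').symm_apply_apply x]
    exact hsymm_sum A' (F A' x)
  -- nontriviality
  haveI : Nontrivial (A ⊗[k] C) := by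
    refine ⟨0, 1, fun h01 => ?_⟩
    obtain ⟨j, hj⟩ : ∃ j, bc.repr 1 j ≠ 0 := by
      by_contra hall
      push_neg at hall
      have : bc.repr (1 : C) = 0 := Finsupp.ext fun j => hall j
      exact one_ne_zero (bc.repr.injective (by simpa using this))
    have h1 : F A (1 : A ⊗[k] C) j = bc.repr 1 j • (1 : A) := by
      rw [Algebra.TensorProduct.one_def, hF]
    rw [← h01, map_zero] at h1
    simp only [Finsupp.coe_zero, Pi.zero_apply] at h1
    have := h1.symm
    rw [smul_eq_zero] at this
    rcases this with h | h
    · exact hj h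
    · exact one_ne_zero h
  -- no zero divisors
  haveI : NoZeroDivisors (A ⊗[k] C) := by
    constructor
    intro x y hxy
    by_contra hcon
    push_neg at hcon
    obtain ⟨hx, hy⟩ := hcon
    obtain ⟨j₁, hj₁⟩ : ∃ j, F A x j ≠ 0 := by
      by_contra hall; push_neg at hall
      exact hx ((F A).injective (by rw [map_zero]; exact Finsupp.ext fun j => hall j))
    obtain ⟨j₂, hj₂⟩ : ∃ j, F A y j ≠ 0 := by
      by_contra hall; push_neg at hall
      exact hy ((F A).injective (by rw [map_zero]; exact Finsupp.ext fun j => hall j))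
    -- the finitely generated subalgebra containing all coordinates
    let s : Finset A := (F A x).frange ∪ (F A y).frange
    let A' : Subalgebra k A := Algebra.adjoin k (↑s : Set A)
    have hmemx : ∀ j, F A x j ∈ A' := by
      intro j
      by_cases h0 : F A x j = 0
      · rw [h0]; exact zero_mem A'
      · exact Algebra.subset_adjoin (Finset.mem_coe.mpr
          (Finset.mem_union_left _ (Finsupp.mem_frange.mpr ⟨h0, j, rfl⟩)))
    have hmemy : ∀ j, F A y j ∈ A' := by
      intro j
      by_cases h0 : F A y j = 0
      · rw [h0]; exact zero_mem A'
      · exact Algebra.subset_adjoin (Finset.mem_coe.mpr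
          (Finset.mem_union_right _ (Finsupp.mem_frange.mpr ⟨h0, j, rfl⟩)))
    haveI : Algebra.FiniteType k A' :=
      (Subalgebra.fg_iff_finiteType A').mp (Subalgebra.fg_adjoin_finset s)
    -- lift x and y
    set x' : A' ⊗[k] C := ∑ j ∈ (F A x).support, (⟨F A x j, hmemx j⟩ : A') ⊗ₜ[k] bc j with hx'
    set y' : A' ⊗[k] C := ∑ j ∈ (F A y).support, (⟨F A y j, hmemy j⟩ : A') ⊗ₜ[k] bc j with hy'
    set ρ : A' ⊗[k] C →ₐ[k] A ⊗[k] C :=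
      Algebra.TensorProduct.map A'.val (AlgHom.id k C) with hρ
    have hρx : ρ x' = x := by
      rw [hx', map_sum]
      conv_rhs => rw [hrec A x]
      apply Finset.sum_congr rfl
      intro j _
      rw [Algebra.TensorProduct.map_tmul]
      rfl
    have hρy : ρ y' = y := by
      rw [hy', map_sum]
      conv_rhs => rw [hrec A y]
      apply Finset.sum_congr rfl
      intro j _
      rw [Algebra.TensorProduct.map_tmul]
      rfl
    -- injectivity of ρ
    have hρinj : Function.Injective ρ := by
      have hval : Function.Injective (A'.val.toLinearMap : A' →ₗ[k] A) := Subtype.val_injective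
      have hL : Function.Injective
          (LinearMap.rTensor C (A'.val.toLinearMap : A' →ₗ[k] A)) :=
        Module.Flat.rTensor_preserves_injective_linearMap _ hval
      have heq : ∀ z : A' ⊗[k] C, ρ z = LinearMap.rTensor C (A'.val.toLinearMap) z := by
        intro z
        induction z using TensorProduct.induction_on with
        | zero => simp
        | tmul u v => simp [hρ]
        | add u v hu hv => simp only [map_add, hu, hv]
      intro z w hzw
      apply hL
      rw [← heq, ← heq, hzw]
    -- a character of A'
    haveI : IsDomain A' := inferInstance
    have hprod : ((⟨F A x j₁, hmemx j₁⟩ : A') * ⟨F A y j₂, hmemy j₂⟩) ≠ 0 := by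
      intro h0
      have : (F A x j₁) * (F A y j₂) = 0 := congrArg Subtype.val h0
      rcases mul_eq_zero.mp this with h | h
      · exact hj₁ h
      · exact hj₂ h
    obtain ⟨φ, hφ⟩ := stmt16_exists_algHom k A' _ hprod
    rw [_root_.map_mul] at hφ
    have hφ1 : φ ⟨F A x j₁, hmemx j₁⟩ ≠ 0 := left_ne_zero_of_mul hφ
    have hφ2 : φ ⟨F A y j₂, hmemy j₂⟩ ≠ 0 := right_ne_zero_of_mul hφ
    -- the induced map to C
    set Φ : A' ⊗[k] C →ₐ[k] C :=
      ((Algebra.TensorProduct.lid k C : k ⊗[k] C ≃ₐ[k] C) : k ⊗[k] C →ₐ[k] C).comp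
        (Algebra.TensorProduct.map φ (AlgHom.id k C)) with hΦ
    have hΦtmul : ∀ (u : A') (v : C), Φ (u ⊗ₜ[k] v) = φ u • v := by
      intro u v
      simp [hΦ]
    have hΦx : Φ x' ≠ 0 := by
      rw [hx', map_sum]
      simp only [hΦtmul]
      intro h0
      have := linearIndependent_iff'.mp bc.linearIndependent (F A x).support
        (fun j => φ ⟨F A x j, hmemx j⟩) h0 j₁ (Finsupp.mem_support_iff.mpr hj₁)
      exact hφ1 this
    have hΦy : Φ y' ≠ 0 := by
      rw [hy', map_sum]
      simp only [hΦtmul]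
      intro h0
      have := linearIndependent_iff'.mp bc.linearIndependent (F A y).support
        (fun j => φ ⟨F A y j, hmemy j⟩) h0 j₂ (Finsupp.mem_support_iff.mpr hj₂)
      exact hφ2 this
    have : Φ (x' * y') ≠ 0 := by
      rw [_root_.map_mul]
      exact mul_ne_zero hΦx hΦy
    have hxy' : x' * y' ≠ 0 := fun h0 => this (by rw [h0, map_zero])
    apply hxy'
    apply hρinj
    rw [_root_.map_mul, hρx, hρy, hxy, map_zero]
  exact NoZeroDivisors.to_isDomain _

end Aux

theorem stmt16 (k : Type) [Field k] [IsAlgClosed k]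
    (A : Type) [CommRing A] [IsDomain A] [Algebra k A]
    (B : Type) [CommRing B] [Algebra k B]
    (a b : ℕ) (M : Matrix (Fin b) (Fin a) (A ⊗[k] B)) :
    IsOpen {p : PrimeSpectrum B | Function.Injective
      ((M.map (Algebra.TensorProduct.map (AlgHom.id k A)
        (Ideal.Quotient.mkₐ k p.asIdeal))).mulVecLin)} := by
  have hset : {p : PrimeSpectrum B | Function.Injective
      ((M.map (Algebra.TensorProduct.map (AlgHom.id k A)
        (Ideal.Quotient.mkₐ k p.asIdeal))).mulVecLin)} =
      ⋃ (f : Fin a → Fin b), ⋃ (_ : Function.Injective f),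
        {p : PrimeSpectrum B |
          Algebra.TensorProduct.map (AlgHom.id k A) (Ideal.Quotient.mkₐ k p.asIdeal)
            ((M.submatrix f id).det) ≠ 0} := by
    ext p
    haveI := p.2
    haveI : IsDomain (A ⊗[k] (B ⧸ p.asIdeal)) := stmt16_tensor_isDomain k A (B ⧸ p.asIdeal)
    simp only [Set.mem_setOf_eq, Set.mem_iUnion]
    rw [stmt16_crit]
    apply exists_congr; intro f
    have hdet : ((M.map ⇑(Algebra.TensorProduct.map (AlgHom.id k A)
          (Ideal.Quotient.mkₐ k p.asIdeal))).submatrix f id).det =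
        Algebra.TensorProduct.map (AlgHom.id k A) (Ideal.Quotient.mkₐ k p.asIdeal)
          ((M.submatrix f id).det) := by
      rw [Matrix.submatrix_map]
      exact (RingHom.map_det
        (Algebra.TensorProduct.map (AlgHom.id k A) (Ideal.Quotient.mkₐ k p.asIdeal)).toRingHom
        (M.submatrix f id)).symm
    rw [hdet, exists_prop]
  rw [hset]
  exact isOpen_iUnion fun f => isOpen_iUnion fun _ => stmt16_open_nonvanishing k A B _
end
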